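/- arXiv:math/9705206 — 6 statements merged into one kernel-verified Lean document; each statement's English description precedes it below -/
import Mathlib

section
/- Let p = x + x²y ∈ K[x,y]. Then K[p] is a retract of K[x,y], i.e., there exists an idempotent K-algebra endomorphism of K[x,y] whose image is K[p]. -/
open MvPolynomial

theorem x_plus_x_sq_y_generates_retract (K : Type*) [Field K] [CharZero K] :
    ∃ φ : MvPolynomial (Fin 2) K →ₐ[K] MvPolynomial (Fin 2) K,
      φ.comp φ = φ ∧
      φ.range = Algebra.adjoin K ({X 0 + X 0 ^ 2 * X 1} : Set (MvPolynomial (Fin 2) K)) := by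
  set p : MvPolynomial (Fin 2) K := X 0 + X 0 ^ 2 * X 1 with hp
  refine ⟨aeval ![p, 0], ?_, ?_⟩
  · apply MvPolynomial.algHom_ext
    intro i
    fin_cases i <;> simp [hp]
  · apply le_antisymm
    · rintro z ⟨q, rfl⟩
      have : ∀ i : Fin 2, (![p, 0] i) ∈ Algebra.adjoin K ({p} : Set (MvPolynomial (Fin 2) K)) := by
        intro i
        fin_cases i
        · exact Algebra.subset_adjoin rfl
        · exact Subalgebra.zero_mem _
      induction q using MvPolynomial.induction_on with
      | C a => simpa using Subalgebra.algebraMap_mem (Algebra.adjoin K ({p} : Set (MvPolynomial (Fin 2) K))) a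
      | add f g hf hg => simpa [map_add] using add_mem hf hg
      | mul_X f i hf => simpa [map_mul] using mul_mem hf (this i)
    · rw [Algebra.adjoin_le_iff]
      rintro z rfl
      exact ⟨X 0, by simp⟩
end

section
/- The polynomial p = x + x²y ∈ K[x,y] is not a coordinate polynomial: there is no polynomial q ∈ K[x,y] such that K[p,q] = K[x,y]. -/
open MvPolynomial

theorem x_plus_x_sq_y_not_coordinate (K : Type*) [Field K] [CharZero K] :
    ¬ ∃ q : MvPolynomial (Fin 2) K,
      Algebra.adjoin K ({X 0 + X 0 ^ 2 * X 1, q} : Set (MvPolynomial (Fin 2) K)) = ⊤ := by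
  rintro ⟨q, hq⟩
  set t : RatFunc K := RatFunc.X with ht_def
  have ht : t ≠ 0 := RatFunc.X_ne_zero
  have htrans : Transcendental K t := by
    rw [ht_def, ← RatFunc.algebraMap_X,
      transcendental_algebraMap_iff (RatFunc.algebraMap_injective K)]
    exact Polynomial.transcendental_X K
  let ψ : MvPolynomial (Fin 2) K →ₐ[K] RatFunc K := aeval ![t, -t⁻¹]
  have hp : ψ (X 0 + X 0 ^ 2 * X 1) = 0 := by
    simp only [ψ, map_add, map_mul, map_pow, aeval_X]
    show t + t ^ 2 * -t⁻¹ = 0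
    field_simp
    ring
  set f : RatFunc K := ψ q with hf_def
  have hrange : ψ.range ≤ Algebra.adjoin K {f} := by
    rw [← Algebra.map_top, ← hq, AlgHom.map_adjoin]
    apply Algebra.adjoin_le
    rintro z ⟨w, hw, rfl⟩
    rcases hw with rfl | rfl
    · rw [hp]; exact Subalgebra.zero_mem _
    · exact Algebra.subset_adjoin rfl
  have ht_mem : t ∈ Algebra.adjoin K {f} := by
    refine hrange ⟨X 0, ?_⟩
    simp [ψ]
  have hti_mem : t⁻¹ ∈ Algebra.adjoin K {f} := by
    have : -t⁻¹ ∈ Algebra.adjoin K {f} := by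
      refine hrange ⟨X 1, ?_⟩
      simp [ψ]
    simpa using (Algebra.adjoin K {f}).neg_mem this
  rw [Algebra.adjoin_singleton_eq_range_aeval] at ht_mem hti_mem
  obtain ⟨g, hg⟩ := ht_mem
  obtain ⟨h, hh⟩ := hti_mem
  replace hg : Polynomial.aeval f g = t := hg
  replace hh : Polynomial.aeval f h = t⁻¹ := hh
  have hgh : Polynomial.aeval f (g * h - 1) = 0 := by
    rw [map_sub, map_mul, hg, hh, map_one, mul_inv_cancel₀ ht, sub_self]
  have htg : Transcendental K (Polynomial.aeval f g) := hg ▸ htrans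
  rw [transcendental_aeval_iff] at htg
  obtain ⟨hft, hgt⟩ := htg
  have hgh0 : g * h - 1 = 0 := by
    by_contra hne
    exact hft ⟨g * h - 1, hne, hgh⟩
  have : IsUnit g := IsUnit.of_mul_eq_one (a := g) h (by linear_combination hgh0)
  rw [Polynomial.isUnit_iff] at this
  obtain ⟨c, _, rfl⟩ := this
  exact hgt (isAlgebraic_algebraMap c)
end

section
/- If p ∈ K[x₁,...,xₙ] is a coordinate polynomial, then p has unimodular gradient: the ideal generated by the partial derivatives ∂p/∂x₁, ..., ∂p/∂xₙ is the whole ring. -/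
open MvPolynomial

/-- Chain rule for partial derivatives of a polynomial substitution. -/
lemma pderiv_aeval_chain (K : Type*) [CommRing K] (n : ℕ)
    (g : Fin n → MvPolynomial (Fin n) K) (k : Fin n)
    (f : MvPolynomial (Fin n) K) :
    pderiv k (aeval g f) =
      ∑ j, aeval g (pderiv j f) * pderiv k (g j) := by
  induction f using MvPolynomial.induction_on with
  | C a => simp
  | add f₁ f₂ h1 h2 =>
      simp only [map_add, h1, h2, add_mul, Finset.sum_add_distrib]
  | mul_X f i ih =>
      rw [map_mul, aeval_X, pderiv_mul, ih, Finset.sum_mul]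
      symm
      calc ∑ j, aeval g (pderiv j (f * X i)) * pderiv k (g j)
          = ∑ j, (aeval g (pderiv j f) * pderiv k (g j) * g i
              + aeval g f * aeval g (pderiv j (X i)) * pderiv k (g j)) := by
            refine Finset.sum_congr rfl fun j _ => ?_
            rw [pderiv_mul, map_add, map_mul, map_mul, aeval_X]
            ring
        _ = (∑ j, aeval g (pderiv j f) * pderiv k (g j) * g i)
              + ∑ j, aeval g f * aeval g (pderiv j (X i)) * pderiv k (g j) :=
            Finset.sum_add_distrib
        _ = (∑ j, aeval g (pderiv j f) * pderiv k (g j)) * g i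
              + aeval g f * pderiv k (g i) := by
            rw [Finset.sum_mul]
            congr 1
            rw [Finset.sum_eq_single i]
            · rw [pderiv_X_self]; simp
            · intro j _ hj
              rw [pderiv_X_of_ne (Ne.symm hj)]; simp
            · simp
        _ = (∑ j, aeval g (pderiv j f) * pderiv k (g j) * g i)
              + aeval g f * pderiv k (g i) := by
            rw [Finset.sum_mul]

theorem coordinate_has_unimodular_gradient (K : Type*) [Field K] [CharZero K]
    (n : ℕ) (p : MvPolynomial (Fin n) K)
    (hp : ∃ g : Fin n → MvPolynomial (Fin n) K, (∃ i, g i = p) ∧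
      Algebra.adjoin K (Set.range g) = ⊤) :
    Ideal.span (Set.range fun i : Fin n => pderiv i p) = ⊤ := by
  obtain ⟨g, ⟨i, hi⟩, hadj⟩ := hp
  -- the substitution map is surjective
  have hsurj : Function.Surjective (aeval (R := K) g) := by
    intro q
    have : q ∈ Algebra.adjoin K (Set.range g) := hadj ▸ Algebra.mem_top
    rw [Algebra.adjoin_range_eq_range_aeval] at this
    exact this
  -- pick preimages of the variables
  choose q hq using fun j => hsurj (X j)
  -- Jacobian matrices
  set M : Matrix (Fin n) (Fin n) (MvPolynomial (Fin n) K) :=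
    fun j k => pderiv k (g j) with hM
  set N : Matrix (Fin n) (Fin n) (MvPolynomial (Fin n) K) :=
    fun a b => aeval g (pderiv b (q a)) with hN
  have hNM : N * M = 1 := by
    ext a k : 1
    have := pderiv_aeval_chain K n g k (q a)
    rw [hq a] at this
    simp only [Matrix.mul_apply, Matrix.one_apply]; simp only [hN, hM]
    rw [← this]
    by_cases h : a = k <;> simp [h, pderiv_X, Pi.single_eq_of_ne, Ne.symm]
  have hMN : M * N = 1 := mul_eq_one_comm.mp hNM
  -- the (i,i) entry gives 1 as a combination of the pderivs of p
  have key : (1 : MvPolynomial (Fin n) K) = ∑ k, pderiv k p * N k i := by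
    have := congrFun (congrFun hMN i) i
    simp only [Matrix.mul_apply, Matrix.one_apply_eq] at this
    rw [← this]
    apply Finset.sum_congr rfl
    intro k _
    show pderiv k (g i) * N k i = pderiv k p * N k i
    rw [hi]
  rw [Ideal.eq_top_iff_one, key]
  exact Ideal.sum_mem _ fun k _ =>
    Ideal.mul_mem_right _ _ (Ideal.subset_span ⟨k, rfl⟩)
end

section
/- If a K-algebra homomorphism φ: K[x₁,...,xₙ] → K[x₁,...,xₙ] satisfies φ(p) = x₁ for some polynomial p, then K[p] is a retract of K[x₁,...,xₙ]. -/
/-! With `ι := aeval (fun _ => p)`, which maps every variable to `p`, one has `ι ∘ φ ∘ ι = ι` because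
`ι (φ p) = ι (X 0) = p`. Hence `ι ∘ φ` is idempotent, and its range is the range of `ι`, namely `K[p]`. -/

open MvPolynomial

namespace AlgHom

variable {R A B : Type*} [CommSemiring R] [Semiring A] [Semiring B] [Algebra R A] [Algebra R B]
  {ι : B →ₐ[R] A} {φ : A →ₐ[R] B}

theorem comp_comp_self_of_comp_comp_eq (h : ι.comp (φ.comp ι) = ι) :
    (ι.comp φ).comp (ι.comp φ) = ι.comp φ :=
  AlgHom.ext fun x => DFunLike.congr_fun h (φ x)

theorem range_comp_of_comp_comp_eq (h : ι.comp (φ.comp ι) = ι) : (ι.comp φ).range = ι.range :=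
  le_antisymm (range_comp_le_range φ ι) <| by
    rintro _ ⟨b, rfl⟩
    exact ⟨ι b, DFunLike.congr_fun h b⟩

end AlgHom

theorem MvPolynomial.range_aeval_const {R A σ : Type*} [CommSemiring R] [CommSemiring A]
    [Algebra R A] [Nonempty σ] (a : A) :
    (aeval fun _ : σ => a : MvPolynomial σ R →ₐ[R] A).range = Algebra.adjoin R {a} := by
  rw [← Algebra.adjoin_range_eq_range_aeval, Set.range_const]

theorem maps_to_x1_implies_retract_general (K : Type*) [Field K]
    (n : ℕ) (hn : 0 < n)
    (φ : MvPolynomial (Fin n) K →ₐ[K] MvPolynomial (Fin n) K)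
    (p : MvPolynomial (Fin n) K) (hφp : φ p = X ⟨0, hn⟩) :
    ∃ ρ : MvPolynomial (Fin n) K →ₐ[K] MvPolynomial (Fin n) K,
      ρ.comp ρ = ρ ∧
      ρ.range = Algebra.adjoin K ({p} : Set (MvPolynomial (Fin n) K)) := by
  have : Nonempty (Fin n) := ⟨⟨0, hn⟩⟩
  set ι : MvPolynomial (Fin n) K →ₐ[K] MvPolynomial (Fin n) K := aeval fun _ => p
  have hι : ι.comp (φ.comp ι) = ι := algHom_ext fun _ => by simp [ι, hφp]
  exact ⟨ι.comp φ, AlgHom.comp_comp_self_of_comp_comp_eq hι,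
    (AlgHom.range_comp_of_comp_comp_eq hι).trans (range_aeval_const p)⟩

theorem maps_to_x1_implies_retract (K : Type*) [Field K] [CharZero K]
    (n : ℕ) (hn : 0 < n)
    (φ : MvPolynomial (Fin n) K →ₐ[K] MvPolynomial (Fin n) K)
    (p : MvPolynomial (Fin n) K) (hφp : φ p = X ⟨0, hn⟩) :
    ∃ ρ : MvPolynomial (Fin n) K →ₐ[K] MvPolynomial (Fin n) K,
      ρ.comp ρ = ρ ∧
      ρ.range = Algebra.adjoin K ({p} : Set (MvPolynomial (Fin n) K)) :=
  maps_to_x1_implies_retract_general K n hn φ p hφp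
end

section
/- For a polynomial p ∈ K[x₁,...,xₙ], the outer rank of p is at least the minimal number of generators (rank) of the ideal generated by the partial derivatives of p; in particular, if p depends, after applying some automorphism, on only one variable x₁, then the ideal generated by the partial derivatives of p is generated by one element up to the automorphism. -/
/-!
By the chain rule, an algebra automorphism `ψ` of `K[x₁, …, xₙ]` transports the ideal generated
by the partial derivatives of `p` onto that of `ψ p`. If `ψ p` only involves `x₁, …, x_k`, its
other partial derivatives vanish, so the latter ideal is generated by `k` elements, and their
images under `ψ⁻¹` generate the ideal of `p`.
-/

open MvPolynomial

theorem Derivation.map_aeval_eq_sum_pderiv {R A M σ : Type*} [CommSemiring R] [CommSemiring A]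
    [Algebra R A] [AddCommMonoid M] [Module A M] [Module R M] [Fintype σ]
    (D : Derivation R A M) (f : σ → A) (r : MvPolynomial σ R) :
    D (aeval f r) = ∑ j, aeval f (pderiv j r) • D (f j) := by
  classical
  induction r using MvPolynomial.induction_on with
  | C a => simp
  | add p q hp hq => simp only [map_add, add_smul, Finset.sum_add_distrib, hp, hq]
  | mul_X p j hp =>
    rw [map_mul, aeval_X, D.leibniz, hp, Finset.smul_sum]
    simp only [Derivation.leibniz, pderiv_X, Pi.single_apply, smul_eq_mul, map_add, map_mul,
      aeval_X, apply_ite, map_zero, mul_one, mul_zero, add_smul, ite_smul, zero_smul,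
      mul_smul, Finset.sum_add_distrib, Finset.sum_ite_eq, Finset.mem_univ, if_true]

namespace MvPolynomial

variable {R σ τ : Type*} [CommSemiring R]

noncomputable def jacobianIdeal (p : MvPolynomial σ R) : Ideal (MvPolynomial σ R) :=
  Ideal.span (Set.range fun i => pderiv i p)

theorem jacobianIdeal_map_le [Fintype σ] (φ : MvPolynomial σ R →ₐ[R] MvPolynomial τ R)
    (p : MvPolynomial σ R) : jacobianIdeal (φ p) ≤ (jacobianIdeal p).map φ := by
  refine Ideal.span_le.mpr (Set.range_subset_iff.mpr fun i => ?_)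
  have hφ (r : MvPolynomial σ R) : aeval (φ ∘ X) r = φ r :=
    DFunLike.congr_fun (aeval_unique φ).symm r
  rw [SetLike.mem_coe, ← hφ, (pderiv i).map_aeval_eq_sum_pderiv]
  simp only [hφ, smul_eq_mul]
  exact Ideal.sum_mem _ fun j _ =>
    Ideal.mul_mem_right _ _ (Ideal.mem_map_of_mem φ (Ideal.subset_span ⟨j, rfl⟩))

theorem jacobianIdeal_algEquiv_apply [Fintype σ] [Fintype τ]
    (ψ : MvPolynomial σ R ≃ₐ[R] MvPolynomial τ R) (p : MvPolynomial σ R) :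
    jacobianIdeal (ψ p) = (jacobianIdeal p).map ψ := by
  refine le_antisymm (jacobianIdeal_map_le ψ.toAlgHom p) (Ideal.map_le_iff_le_comap.mpr ?_)
  calc jacobianIdeal p = jacobianIdeal (ψ.symm (ψ p)) := by rw [ψ.symm_apply_apply]
    _ ≤ (jacobianIdeal (ψ p)).map ψ.symm := jacobianIdeal_map_le ψ.symm.toAlgHom (ψ p)
    _ ≤ (jacobianIdeal (ψ p)).comap ψ :=
      Ideal.map_le_iff_le_comap.mpr fun q hq => by simpa [Ideal.mem_comap] using hq

theorem jacobianIdeal_eq_span_image_of_mem_supported {p : MvPolynomial σ R} {s : Set σ}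
    (hp : p ∈ supported R s) : jacobianIdeal p = Ideal.span ((fun i => pderiv i p) '' s) := by
  refine le_antisymm (Ideal.span_le.mpr (Set.range_subset_iff.mpr fun i => ?_))
    (Ideal.span_mono (Set.image_subset_range _ s))
  by_cases hi : i ∈ s
  · exact Ideal.subset_span ⟨i, hi, rfl⟩
  · rw [SetLike.mem_coe, pderiv_eq_zero_of_notMem_vars fun hv => hi (mem_supported.mp hp hv)]
    exact Ideal.zero_mem _

end MvPolynomial

theorem orank_ge_rank_of_gradient_ideal_general (K : Type*) [Field K]
    (n : ℕ) (p : MvPolynomial (Fin n) K) (k : ℕ)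
    (h : ∃ ψ : MvPolynomial (Fin n) K ≃ₐ[K] MvPolynomial (Fin n) K,
      ψ p ∈ MvPolynomial.supported K {i : Fin n | (i : ℕ) < k}) :
    ∃ S : Finset (MvPolynomial (Fin n) K), S.card ≤ k ∧
      Ideal.span (S : Set (MvPolynomial (Fin n) K)) =
      Ideal.span (Set.range fun i : Fin n => pderiv i p) := by
  classical
  obtain ⟨ψ, hψp⟩ := h
  let T : Finset (Fin n) := {i | (i : ℕ) < k}
  refine ⟨T.image fun i => ψ.symm (pderiv i (ψ p)), ?_, ?_⟩
  · calc _ ≤ T.card := Finset.card_image_le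
      _ = min n k := Fin.card_filter_val_lt
      _ ≤ k := min_le_right n k
  · have hJ : jacobianIdeal p = (jacobianIdeal (ψ p)).map ψ.symm := by
      rw [← jacobianIdeal_algEquiv_apply, ψ.symm_apply_apply]
    rw [Finset.coe_image, Finset.coe_filter_univ, ← Set.image_image, ← Ideal.map_span,
      ← jacobianIdeal_eq_span_image_of_mem_supported hψp, ← hJ, jacobianIdeal]

theorem orank_ge_rank_of_gradient_ideal (K : Type*) [Field K] [CharZero K]
    (n : ℕ) (p : MvPolynomial (Fin n) K) (k : ℕ)
    (h : ∃ ψ : MvPolynomial (Fin n) K ≃ₐ[K] MvPolynomial (Fin n) K,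
      ψ p ∈ MvPolynomial.supported K {i : Fin n | (i : ℕ) < k}) :
    ∃ S : Finset (MvPolynomial (Fin n) K), S.card ≤ k ∧
      Ideal.span (S : Set (MvPolynomial (Fin n) K)) =
      Ideal.span (Set.range fun i : Fin n => pderiv i p) :=
  orank_ge_rank_of_gradient_ideal_general K n p k h
end

section
/- A polynomial p ∈ K[x₁,...,xₙ] is a coordinate polynomial if and only if p has outer rank 1 and p has unimodular gradient. -/
open MvPolynomial

section Aux

-- A surjective ring endomorphism of a Noetherian ring is injective.
private def iterHom {R : Type*} [CommRing R] (f : R →+* R) : ℕ → (R →+* R)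
  | 0 => RingHom.id R
  | (k+1) => f.comp (iterHom f k)

private lemma injective_of_surjective_ringEnd {R : Type*} [CommRing R] [IsNoetherianRing R]
    (f : R →+* R) (hf : Function.Surjective f) : Function.Injective f := by
  have hsurj : ∀ k, Function.Surjective (iterHom f k) := by
    intro k; induction k with
    | zero => exact Function.surjective_id
    | succ k ih => exact hf.comp ih
  have hmono : Monotone (fun k => RingHom.ker (iterHom f k)) := by
    apply monotone_nat_of_le_succ
    intro k x hx
    simp only [RingHom.mem_ker] at hx ⊢
    show f (iterHom f k x) = 0
    rw [hx, map_zero]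
  obtain ⟨m, hm⟩ := monotone_stabilizes_iff_noetherian.mpr inferInstance
    ⟨fun k => (RingHom.ker (iterHom f k) : Submodule R R), hmono⟩
  rw [injective_iff_map_eq_zero]
  intro a ha
  obtain ⟨b, rfl⟩ := hsurj m a
  have hb : b ∈ RingHom.ker (iterHom f (m+1)) := by
    simpa [iterHom, RingHom.mem_ker] using ha
  have := hm (m+1) (Nat.le_succ m)
  simp only [OrderHom.coe_mk] at this
  rw [← this] at hb
  exact hb

private lemma coeff_pderiv' {K : Type*} [CommRing K] {n : ℕ} (i : Fin n) (m : Fin n →₀ ℕ)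
    (f : MvPolynomial (Fin n) K) :
    coeff m (pderiv i f) = (m i + 1 : ℕ) * coeff (m + Finsupp.single i 1) f := by
  induction f using MvPolynomial.induction_on' with
  | add p q hp hq => simp [hp, hq, mul_add]
  | monomial s a =>
    rw [pderiv_monomial]
    rw [coeff_monomial, coeff_monomial]
    by_cases hs : s = m + Finsupp.single i 1
    · have h1 : s - Finsupp.single i 1 = m := by
        ext j; rw [hs]; simp
      have h2 : s i = m i + 1 := by
        rw [hs]; simp
      rw [if_pos h1, if_pos hs, h2]
      push_cast
      ring_nf
    · rw [if_neg hs]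
      by_cases h1 : s - Finsupp.single i 1 = m
      · rw [if_pos h1]
        have hsi : s i = 0 := by
          by_contra hsi
          apply hs
          have hle : Finsupp.single i 1 ≤ s := by
            rw [Finsupp.single_le_iff]; omega
          rw [← h1, tsub_add_cancel_of_le hle]
        simp [hsi]
      · rw [if_neg h1, mul_zero]

private lemma eq_C_of_pderiv_eq_zero {K : Type*} [Field K] [CharZero K] {n : ℕ}
    (f : MvPolynomial (Fin n) K) (h : ∀ i, pderiv i f = 0) : ∃ c, f = C c := by
  refine ⟨coeff 0 f, ?_⟩
  ext m
  rcases eq_or_ne m 0 with rfl | hm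
  · simp
  · rw [coeff_C, if_neg (Ne.symm hm)]
    obtain ⟨i, hi⟩ : ∃ i, m i ≠ 0 := by
      by_contra hc
      push_neg at hc
      exact hm (Finsupp.ext hc)
    have key := coeff_pderiv' i (m - Finsupp.single i 1) f
    rw [h i] at key
    have hle : Finsupp.single i 1 ≤ m := by
      rw [Finsupp.single_le_iff]; omega
    rw [tsub_add_cancel_of_le hle] at key
    have hne : ((((m - Finsupp.single i 1) : Fin n →₀ ℕ) i + 1 : ℕ) : K) ≠ 0 :=
      Nat.cast_ne_zero.mpr (Nat.succ_ne_zero _)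
    simp only [coeff_zero] at key
    exact (mul_eq_zero.mp key.symm).resolve_left hne

private lemma pderiv_aeval' {K : Type*} [CommRing K] {n : ℕ}
    (g : Fin n → MvPolynomial (Fin n) K) (i : Fin n) (f : MvPolynomial (Fin n) K) :
    pderiv i (aeval g f) = ∑ j, aeval g (pderiv j f) * pderiv i (g j) := by
  induction f using MvPolynomial.induction_on with
  | C a => simp
  | add p q hp hq =>
    simp only [map_add, hp, hq, ← Finset.sum_add_distrib]
    congr 1; ext j; ring_nf
  | mul_X p j hp =>
    have key : ∀ k : Fin n, aeval g ((pderiv k) (p * X j)) * pderiv i (g k)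
        = aeval g (pderiv k p) * pderiv i (g k) * g j
          + (if k = j then aeval g p * pderiv i (g k) else 0) := by
      intro k
      rcases eq_or_ne k j with rfl | hk
      · rw [pderiv_mul, pderiv_X_self]
        simp only [map_add, map_mul, aeval_X, map_one, mul_one, eq_self_iff_true, if_true]
        ring_nf
      · rw [pderiv_mul, pderiv_X_of_ne (Ne.symm hk)]
        simp only [map_add, map_mul, aeval_X, map_zero, mul_zero, add_zero, if_neg hk]
        ring_nf
    rw [Finset.sum_congr rfl (fun k _ => key k), Finset.sum_add_distrib,
      Finset.sum_ite_eq' Finset.univ j _]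
    simp only [map_mul, aeval_X, pderiv_mul, hp, Finset.mem_univ, if_pos]
    rw [Finset.sum_mul]

private lemma exists_C_of_isUnit {K : Type*} [Field K] :
    ∀ {n : ℕ} (f : MvPolynomial (Fin n) K), IsUnit f → ∃ c : K, f = C c := by
  intro n
  induction n with
  | zero =>
    intro f _
    exact ⟨f.coeff 0, (eq_C_of_isEmpty f)⟩
  | succ n ih =>
    intro f hf
    have h1 : IsUnit (finSuccEquiv K n f) := hf.map (finSuccEquiv K n)
    obtain ⟨r, hr, hrf⟩ := Polynomial.isUnit_iff.mp h1
    obtain ⟨c, rfl⟩ := ih r hr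
    refine ⟨c, ?_⟩
    have h2 := congrArg (fun x => (finSuccEquiv K n).symm x) hrf
    rw [AlgEquiv.symm_apply_apply] at h2
    rw [← h2]
    have h3 := MvPolynomial.finSuccEquiv_comp_C_eq_C (R := K) n
    have := congrArg (fun φ => φ c) h3
    simpa using this

private lemma span_grad_top_of_equiv {K : Type*} [Field K] {n : ℕ}
    (ψ : MvPolynomial (Fin n) K ≃ₐ[K] MvPolynomial (Fin n) K) (p : MvPolynomial (Fin n) K)
    (h : Ideal.span (Set.range fun i => pderiv i p) = ⊤) :
    Ideal.span (Set.range fun i => pderiv i (ψ p)) = ⊤ := by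
  set I := Ideal.span (Set.range fun i => pderiv i (ψ p)) with hI
  have hφ := aeval_unique (ψ.symm.toAlgHom)
  have hclaim : ∀ j, ψ (pderiv j p) ∈ I := by
    intro j
    have hp : pderiv j p
        = ∑ k, aeval (⇑ψ.symm.toAlgHom ∘ X) (pderiv k (ψ p))
            * pderiv j ((⇑ψ.symm.toAlgHom ∘ X) k) := by
      rw [← pderiv_aeval']
      rw [← hφ]
      simp
    rw [hp, map_sum]
    apply Ideal.sum_mem
    intro k _
    rw [map_mul]
    have : ψ ((aeval (⇑ψ.symm.toAlgHom ∘ X)) (pderiv k (ψ p))) = pderiv k (ψ p) := by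
      rw [← hφ]
      simp
    rw [this]
    exact Ideal.mul_mem_right _ _ (Ideal.subset_span ⟨k, rfl⟩)
  have h1 : (1 : MvPolynomial (Fin n) K) ∈
      Ideal.map (↑ψ : MvPolynomial (Fin n) K →+* MvPolynomial (Fin n) K)
        (Ideal.span (Set.range fun i => pderiv i p)) := by
    have := Ideal.mem_map_of_mem (↑ψ : MvPolynomial (Fin n) K →+* MvPolynomial (Fin n) K)
      (show (1 : MvPolynomial (Fin n) K) ∈ Ideal.span (Set.range fun i => pderiv i p) from
        h ▸ Submodule.mem_top)
    simpa using this
  rw [Ideal.map_span] at h1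
  have hle : Ideal.span ((↑ψ : MvPolynomial (Fin n) K →+* MvPolynomial (Fin n) K) ''
      (Set.range fun i => pderiv i p)) ≤ I := by
    apply Ideal.span_le.mpr
    rintro x ⟨y, ⟨j, rfl⟩, rfl⟩
    exact hclaim j
  rw [Ideal.eq_top_iff_one]
  exact hle h1

end Aux

theorem coordinate_iff_orank_one_and_unimodular (K : Type*) [Field K] [CharZero K]
    (n : ℕ) (p : MvPolynomial (Fin n) K) :
    (∃ g : Fin n → MvPolynomial (Fin n) K, (∃ i, g i = p) ∧
        Algebra.adjoin K (Set.range g) = ⊤) ↔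
    ((∃ ψ : MvPolynomial (Fin n) K ≃ₐ[K] MvPolynomial (Fin n) K,
        ψ p ∈ MvPolynomial.supported K {i : Fin n | (i : ℕ) < 1}) ∧
      ¬ (∃ ψ : MvPolynomial (Fin n) K ≃ₐ[K] MvPolynomial (Fin n) K,
        ψ p ∈ MvPolynomial.supported K (∅ : Set (Fin n))) ∧
      Ideal.span (Set.range fun i : Fin n => pderiv i p) = ⊤) := by
  classical
  constructor
  · rintro ⟨g, ⟨i, hgi⟩, hadj⟩
    haveI : NeZero n := ⟨i.pos.ne'⟩
    set g' : Fin n → MvPolynomial (Fin n) K := g ∘ (Equiv.swap (0 : Fin n) i) with hg'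
    have hrange : Set.range g' = Set.range g := (Equiv.swap (0 : Fin n) i).surjective.range_comp g
    have hsurj : Function.Surjective (aeval g' : MvPolynomial (Fin n) K →ₐ[K] _) := by
      rw [← AlgHom.range_eq_top, ← Algebra.adjoin_range_eq_range_aeval, hrange, hadj]
    have hinj : Function.Injective (aeval g' : MvPolynomial (Fin n) K →ₐ[K] _) :=
      injective_of_surjective_ringEnd
        ((aeval g' : MvPolynomial (Fin n) K →ₐ[K] _) :
          MvPolynomial (Fin n) K →+* MvPolynomial (Fin n) K) hsurj
    set Φ : MvPolynomial (Fin n) K ≃ₐ[K] MvPolynomial (Fin n) K :=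
      AlgEquiv.ofBijective (aeval g') ⟨hinj, hsurj⟩ with hΦ
    have hΦX : Φ (X 0) = p := by
      show aeval g' (X 0) = p
      rw [aeval_X]
      show g (Equiv.swap (0 : Fin n) i 0) = p
      rw [Equiv.swap_apply_left]
      exact hgi
    have hψp : Φ.symm p = X 0 := by rw [← hΦX, AlgEquiv.symm_apply_apply]
    have hXgrad : Ideal.span (Set.range fun j : Fin n =>
        pderiv j (X 0 : MvPolynomial (Fin n) K)) = ⊤ := by
      rw [Ideal.eq_top_iff_one]
      exact Ideal.subset_span ⟨0, pderiv_X_self 0⟩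
    have hgrad : Ideal.span (Set.range fun j : Fin n => pderiv j p) = ⊤ := by
      have := span_grad_top_of_equiv Φ (X 0) hXgrad
      rwa [hΦX] at this
    refine ⟨⟨Φ.symm, ?_⟩, ?_, hgrad⟩
    · rw [hψp]
      exact X_mem_supported.mpr (by simp)
    · rintro ⟨ψ, hψ⟩
      rw [supported_empty] at hψ
      obtain ⟨a, ha⟩ := Algebra.mem_bot.mp hψ
      have hpa : p = C a := by
        apply ψ.injective
        rw [← ha, ← algebraMap_eq]
        exact (ψ.commutes a).symm
      have hle : Ideal.span (Set.range fun j : Fin n => pderiv j p) ≤ ⊥ := by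
        apply Ideal.span_le.mpr
        rintro x ⟨j, rfl⟩
        simp [hpa]
      rw [hgrad] at hle
      have h1 : (1 : MvPolynomial (Fin n) K) ∈ (⊥ : Ideal (MvPolynomial (Fin n) K)) :=
        hle Submodule.mem_top
      simp at h1
  · rintro ⟨⟨ψ, hψ⟩, -, hspan⟩
    have hn : n ≠ 0 := by
      rintro rfl
      rw [Set.range_eq_empty, Ideal.span_empty] at hspan
      have h1 : (1 : MvPolynomial (Fin 0) K) ∈ (⊥ : Ideal (MvPolynomial (Fin 0) K)) :=
        hspan ▸ Submodule.mem_top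
      simp at h1
    haveI : NeZero n := ⟨hn⟩
    set q := ψ p with hq
    have hgradq := span_grad_top_of_equiv ψ p hspan
    have hvars : ∀ j : Fin n, j ≠ 0 → pderiv j q = 0 := by
      intro j hj
      apply pderiv_eq_zero_of_notMem_vars
      intro hmem
      have h1 : (j : ℕ) < 1 := mem_supported.mp hψ hmem
      exact hj (Fin.ext (by simpa using Nat.lt_one_iff.mp h1))
    have hunit : IsUnit (pderiv 0 q) := by
      rw [← Ideal.span_singleton_eq_top, eq_top_iff, ← hgradq]
      apply Ideal.span_le.mpr
      rintro x ⟨j, rfl⟩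
      rcases eq_or_ne j 0 with rfl | hj
      · exact Ideal.subset_span rfl
      · show pderiv j (ψ p) ∈ _
        rw [← hq, hvars j hj]
        exact (Ideal.span _).zero_mem
    obtain ⟨c, hc⟩ := exists_C_of_isUnit _ hunit
    have hc0 : c ≠ 0 := fun h => hunit.ne_zero (by rw [hc, h, map_zero])
    have hr : ∀ j, pderiv j (q - C c * X 0) = 0 := by
      intro j
      rcases eq_or_ne j 0 with rfl | hj
      · rw [map_sub, hc, pderiv_C_mul, pderiv_X_self, mul_one, sub_self]
      · rw [map_sub, hvars j hj, pderiv_C_mul, pderiv_X_of_ne (Ne.symm hj), mul_zero, sub_zero]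
    obtain ⟨d, hd⟩ := eq_C_of_pderiv_eq_zero _ hr
    have hq2 : q = C c * X 0 + C d := by rw [← hd]; ring
    set g : Fin n → MvPolynomial (Fin n) K :=
      Function.update (fun k : Fin n => ψ.symm (X k)) 0 p with hg
    have hg0 : g 0 = p := by rw [hg]; simp
    refine ⟨g, ⟨0, hg0⟩, ?_⟩
    have hmem : ∀ k : Fin n, ψ.symm (X k) ∈ Algebra.adjoin K (Set.range g) := by
      intro k
      rcases eq_or_ne k 0 with rfl | hk
      · have hsymmC : ∀ x : K, ψ.symm (C x) = C x := by
          intro x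
          rw [← algebraMap_eq]
          exact ψ.symm.commutes x
        have hp' : p = C c * ψ.symm (X 0) + C d := by
          have h2 := congrArg (fun x => ψ.symm x) hq2
          rw [hq, AlgEquiv.symm_apply_apply, map_add, map_mul, hsymmC, hsymmC] at h2
          exact h2
        have h0 : ψ.symm (X 0) = C c⁻¹ * (p - C d) := by
          rw [hp', add_sub_cancel_right, ← mul_assoc, ← C_mul, inv_mul_cancel₀ hc0, C_1, one_mul]
        rw [h0]
        apply mul_mem
        · exact Subalgebra.algebraMap_mem _ c⁻¹
        · apply sub_mem
          · exact Algebra.subset_adjoin ⟨0, hg0⟩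
          · exact Subalgebra.algebraMap_mem _ d
      · have hgk : g k = ψ.symm (X k) := Function.update_of_ne hk _ _
        rw [← hgk]
        exact Algebra.subset_adjoin ⟨k, rfl⟩
    have htop : Algebra.adjoin K (Set.range fun k : Fin n => ψ.symm (X k)) = ⊤ := by
      have h1 : (aeval (fun k : Fin n => ψ.symm (X k)) : MvPolynomial (Fin n) K →ₐ[K] _)
          = ψ.symm.toAlgHom := (aeval_unique ψ.symm.toAlgHom).symm
      rw [Algebra.adjoin_range_eq_range_aeval, h1]
      exact (AlgHom.range_eq_top _).mpr ψ.symm.surjective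
    rw [eq_top_iff, ← htop]
    apply Algebra.adjoin_le
    rintro x ⟨k, rfl⟩
    exact hmem k
end
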